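/- Let 𝒴 be a finite linearly ordered set and let Q, Q' : 𝒴 → (0,1] be strictly positive probability mass functions on 𝒴. Let n ≥ 1 be a natural number and p ∈ (0,1); set m = n·p and define A(y) = (1 − p + p·Q(≤y))^n − (1 − p + p·Q(<y))^n and A'(y) = (1 − p + p·Q'(≤y))^n − (1 − p + p·Q'(<y))^n (the selection algorithm with K ∼ Bin(n,p)). Let δ : ℝ → [0,∞) be such that for every s ∈ ℝ both ∑_y max(Q(y) − e^s Q'(y), 0) ≤ δ(s) and ∑_y max(Q'(y) − e^s Q(y), 0) ≤ δ(s). Let ε₁ ≥ 0 satisfy ε₁ ≥ log(1 + (p/(1−p))·δ(ε₁)). Then for every ε ∈ ℝ: ∑_{y∈𝒴} max(A(y) − e^ε·A'(y), 0) ≤ m · δ(ε̂), where ε̂ = ε − (n−1)·log( 1 + p·(e^{ε₁} − 1) + p·δ(ε₁) ). -/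
import Mathlib


open Finset Real

/-- Cumulative mass `Q(≤ y)` of a pmf on a finite linearly ordered set. -/
noncomputable def cumLE {Y : Type*} [Fintype Y] [LinearOrder Y] (Q : Y → ℝ) (y : Y) : ℝ :=
  ∑ z ∈ Finset.univ.filter (fun z => z ≤ y), Q z

/-- Cumulative mass `Q(< y)` of a pmf on a finite linearly ordered set. -/
noncomputable def cumLT {Y : Type*} [Fintype Y] [LinearOrder Y] (Q : Y → ℝ) (y : Y) : ℝ :=
  ∑ z ∈ Finset.univ.filter (fun z => z < y), Q z

lemma cumLE_eq_cumLT_add {Y : Type*} [Fintype Y] [LinearOrder Y] (Q : Y → ℝ) (y : Y) :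
    cumLE Q y = cumLT Q y + Q y := by
  unfold cumLE cumLT
  have h : Finset.univ.filter (fun z => z ≤ y)
      = insert y (Finset.univ.filter (fun z => z < y)) := by
    ext z
    simp only [Finset.mem_filter, Finset.mem_univ, true_and, Finset.mem_insert]
    constructor
    · intro hz; rcases lt_or_eq_of_le hz with h' | h'
      · exact Or.inr h'
      · exact Or.inl h'
    · rintro (rfl | h'); · exact le_refl _
      · exact le_of_lt h'
  rw [h, Finset.sum_insert (by simp)]
  ring

lemma cumLT_nonneg {Y : Type*} [Fintype Y] [LinearOrder Y] (Q : Y → ℝ)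
    (hQ : ∀ z, 0 ≤ Q z) (y : Y) : 0 ≤ cumLT Q y :=
  Finset.sum_nonneg fun z _ => hQ z

lemma cumLE_nonneg {Y : Type*} [Fintype Y] [LinearOrder Y] (Q : Y → ℝ)
    (hQ : ∀ z, 0 ≤ Q z) (y : Y) : 0 ≤ cumLE Q y :=
  Finset.sum_nonneg fun z _ => hQ z

lemma cumLE_le_one {Y : Type*} [Fintype Y] [LinearOrder Y] (Q : Y → ℝ)
    (hQ : ∀ z, 0 ≤ Q z) (hsum : ∑ y, Q y = 1) (y : Y) : cumLE Q y ≤ 1 := by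
  unfold cumLE
  calc ∑ z ∈ Finset.univ.filter (fun z => z ≤ y), Q z
      ≤ ∑ z, Q z := Finset.sum_le_sum_of_subset_of_nonneg (Finset.filter_subset _ _)
        (fun i _ _ => hQ i)
    _ = 1 := hsum

lemma sum_sub_le_delta {Y : Type*} [Fintype Y] (Q Q' : Y → ℝ) (E d : ℝ) (s : Finset Y)
    (h : ∑ y, max (Q y - E * Q' y) 0 ≤ d) :
    ∑ y ∈ s, Q y - E * ∑ y ∈ s, Q' y ≤ d := by
  have h1 : ∑ y ∈ s, Q y - E * ∑ y ∈ s, Q' y = ∑ y ∈ s, (Q y - E * Q' y) := by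
    rw [Finset.mul_sum, Finset.sum_sub_distrib]
  rw [h1]
  calc ∑ y ∈ s, (Q y - E * Q' y) ≤ ∑ y ∈ s, max (Q y - E * Q' y) 0 :=
        Finset.sum_le_sum fun i _ => le_max_left _ _
    _ ≤ ∑ y, max (Q y - E * Q' y) 0 :=
        Finset.sum_le_sum_of_subset_of_nonneg (Finset.subset_univ s)
          (fun i _ _ => le_max_right _ _)
    _ ≤ d := h

lemma F_bound (p E d c c' : ℝ) (hp0 : 0 < p) (hp1 : p < 1) (hE : 1 ≤ E) (hd : 0 ≤ d)
    (hkey : p * d ≤ (1 - p) * (E - 1)) (hc'1 : c' ≤ 1) (hdiff : c - E * c' ≤ d) :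
    1 - p + p * c ≤ (1 + p * (E - 1) + p * d) * (1 - p + p * c') := by
  nlinarith [mul_nonneg (mul_nonneg hp0.le (sub_nonneg.2 hc'1))
      (sub_nonneg.2 hkey), mul_nonneg hp0.le (by linarith : (0:ℝ) ≤ E * c' + d - c)]

set_option maxHeartbeats 2000000 in
/-- Theorem 5.7: hockey-stick privacy-profile bound for private selection with a
binomially distributed number of candidates `K ∼ Bin(n, p)`. -/
theorem private_selection_binomial_bound
    {Y : Type*} [Fintype Y] [LinearOrder Y]
    (Q Q' : Y → ℝ)
    (hQ_pos : ∀ y, 0 < Q y) (hQ_le : ∀ y, Q y ≤ 1) (hQ_sum : ∑ y, Q y = 1)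
    (hQ'_pos : ∀ y, 0 < Q' y) (hQ'_le : ∀ y, Q' y ≤ 1) (hQ'_sum : ∑ y, Q' y = 1)
    (n : ℕ) (hn : 1 ≤ n) (p : ℝ) (hp : p ∈ Set.Ioo (0 : ℝ) 1)
    (m : ℝ) (hm : m = n * p)
    (A A' : Y → ℝ)
    (hA : ∀ y, A y = (1 - p + p * cumLE Q y) ^ n - (1 - p + p * cumLT Q y) ^ n)
    (hA' : ∀ y, A' y = (1 - p + p * cumLE Q' y) ^ n - (1 - p + p * cumLT Q' y) ^ n)
    (δ : ℝ → ℝ) (hδ_nonneg : ∀ s, 0 ≤ δ s)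
    (hδ : ∀ s, ∑ y, max (Q y - Real.exp s * Q' y) 0 ≤ δ s)
    (hδ' : ∀ s, ∑ y, max (Q' y - Real.exp s * Q y) 0 ≤ δ s)
    (ε₁ : ℝ) (hε₁ : 0 ≤ ε₁)
    (hε₁' : Real.log (1 + (p / (1 - p)) * δ ε₁) ≤ ε₁)
    (ε : ℝ) :
    ∑ y, max (A y - Real.exp ε * A' y) 0
      ≤ m * δ (ε - ((n : ℝ) - 1) * Real.log (1 + p * (Real.exp ε₁ - 1) + p * δ ε₁)) := by
  obtain ⟨hp0, hp1⟩ := hp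
  set d := δ ε₁ with hd_def
  set E := Real.exp ε₁ with hE_def
  set C := 1 + p * (E - 1) + p * d with hC_def
  have hd0 : 0 ≤ d := hδ_nonneg ε₁
  have hE1 : 1 ≤ E := Real.one_le_exp hε₁
  have h1p : (0:ℝ) < 1 - p := by linarith
  have hkey : p * d ≤ (1 - p) * (E - 1) := by
    have hx : (0:ℝ) < 1 + p / (1 - p) * d := by
      have : 0 ≤ p / (1 - p) * d := mul_nonneg (div_nonneg hp0.le h1p.le) hd0
      linarith
    have h2 : 1 + p / (1 - p) * d ≤ E := by
      have := Real.exp_le_exp.2 hε₁'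
      rwa [Real.exp_log hx] at this
    have h3 : p / (1 - p) * d ≤ E - 1 := by linarith
    have h4 := mul_le_mul_of_nonneg_right h3 h1p.le
    rw [div_mul_eq_mul_div, div_mul_eq_mul_div, mul_div_assoc,
      div_self (ne_of_gt h1p), mul_one] at h4
    linarith [h4]
  have hC1 : (1:ℝ) ≤ C := by
    have h1 : 0 ≤ p * (E - 1) := mul_nonneg hp0.le (by linarith)
    have h2 : 0 ≤ p * d := mul_nonneg hp0.le hd0
    simp only [hC_def]; linarith
  have hC0 : (0:ℝ) < C := by linarith
  set εh := ε - ((n : ℝ) - 1) * Real.log C with hεh_def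
  set eh := Real.exp εh with heh_def
  have heh0 : 0 < eh := Real.exp_pos _
  have hexp : Real.exp ε = eh * C ^ (n - 1) := by
    have hcast : ((n : ℝ) - 1) = ((n - 1 : ℕ) : ℝ) := by
      rw [Nat.cast_sub hn]; norm_num
    rw [heh_def, hεh_def, ← Real.exp_log hC0, ← Real.exp_nat_mul, ← Real.exp_add,
      Real.exp_log hC0, hcast]
    ring_nf
  -- per-point bound
  have hmain : ∀ y, max (A y - Real.exp ε * A' y) 0
      ≤ ((n : ℝ) * p) * max (Q y - eh * Q' y) 0 := by
    intro y
    have hc0 : 0 ≤ cumLE Q y := cumLE_nonneg Q (fun z => (hQ_pos z).le) y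
    have hb0 : 0 ≤ cumLT Q y := cumLT_nonneg Q (fun z => (hQ_pos z).le) y
    have hc1 : cumLE Q y ≤ 1 := cumLE_le_one Q (fun z => (hQ_pos z).le) hQ_sum y
    have hb1 : cumLT Q y ≤ 1 := by
      have := cumLE_eq_cumLT_add Q y; have := hQ_pos y; linarith
    have hc'0 : 0 ≤ cumLE Q' y := cumLE_nonneg Q' (fun z => (hQ'_pos z).le) y
    have hb'0 : 0 ≤ cumLT Q' y := cumLT_nonneg Q' (fun z => (hQ'_pos z).le) y
    have hc'1 : cumLE Q' y ≤ 1 := cumLE_le_one Q' (fun z => (hQ'_pos z).le) hQ'_sum y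
    have hb'1 : cumLT Q' y ≤ 1 := by
      have := cumLE_eq_cumLT_add Q' y; have := hQ'_pos y; linarith
    have hdiffc : cumLE Q y - E * cumLE Q' y ≤ d :=
      sum_sub_le_delta Q Q' E d _ (hδ ε₁)
    have hdiffb : cumLT Q y - E * cumLT Q' y ≤ d :=
      sum_sub_le_delta Q Q' E d _ (hδ ε₁)
    have hFc : 1 - p + p * cumLE Q y ≤ C * (1 - p + p * cumLE Q' y) :=
      F_bound p E d _ _ hp0 hp1 hE1 hd0 hkey hc'1 hdiffc
    have hFb : 1 - p + p * cumLT Q y ≤ C * (1 - p + p * cumLT Q' y) :=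
      F_bound p E d _ _ hp0 hp1 hE1 hd0 hkey hb'1 hdiffb
    have hFc0 : 0 ≤ 1 - p + p * cumLE Q y := by
      have := mul_nonneg hp0.le hc0; linarith
    have hFb0 : 0 ≤ 1 - p + p * cumLT Q y := by
      have := mul_nonneg hp0.le hb0; linarith
    have hFc1 : 1 - p + p * cumLE Q y ≤ 1 := by
      have := mul_le_mul_of_nonneg_left hc1 hp0.le; linarith
    have hFb1 : 1 - p + p * cumLT Q y ≤ 1 := by
      have := mul_le_mul_of_nonneg_left hb1 hp0.le; linarith
    have hFc'0 : 0 ≤ 1 - p + p * cumLE Q' y := by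
      have := mul_nonneg hp0.le hc'0; linarith
    have hFb'0 : 0 ≤ 1 - p + p * cumLT Q' y := by
      have := mul_nonneg hp0.le hb'0; linarith
    set S := ∑ i ∈ Finset.range n,
      (1 - p + p * cumLE Q y) ^ i * (1 - p + p * cumLT Q y) ^ (n - 1 - i) with hS_def
    set S' := ∑ i ∈ Finset.range n,
      (1 - p + p * cumLE Q' y) ^ i * (1 - p + p * cumLT Q' y) ^ (n - 1 - i) with hS'_def
    have hAy : A y = S * (p * Q y) := by
      have hxy : (1 - p + p * cumLE Q y) - (1 - p + p * cumLT Q y) = p * Q y := by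
        rw [cumLE_eq_cumLT_add]; ring
      rw [hA y, ← geom_sum₂_mul, hxy]
    have hA'y : A' y = S' * (p * Q' y) := by
      have hxy : (1 - p + p * cumLE Q' y) - (1 - p + p * cumLT Q' y) = p * Q' y := by
        rw [cumLE_eq_cumLT_add]; ring
      rw [hA' y, ← geom_sum₂_mul, hxy]
    have hS0 : 0 ≤ S :=
      Finset.sum_nonneg fun i _ => mul_nonneg (pow_nonneg hFc0 _) (pow_nonneg hFb0 _)
    have hS'0 : 0 ≤ S' :=
      Finset.sum_nonneg fun i _ => mul_nonneg (pow_nonneg hFc'0 _) (pow_nonneg hFb'0 _)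
    have hSn : S ≤ (n : ℝ) := by
      calc S ≤ ∑ _i ∈ Finset.range n, (1:ℝ) :=
            Finset.sum_le_sum fun i _ =>
              mul_le_one₀ (pow_le_one₀ hFc0 hFc1) (pow_nonneg hFb0 _) (pow_le_one₀ hFb0 hFb1)
        _ = (n : ℝ) := by simp
    have hSle : S ≤ C ^ (n - 1) * S' := by
      rw [hS_def, hS'_def, Finset.mul_sum]
      apply Finset.sum_le_sum
      intro i hi
      have hi' : i ≤ n - 1 := by
        have := Finset.mem_range.mp hi; omega
      have hik : i + (n - 1 - i) = n - 1 := by omega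
      have h1 : (1 - p + p * cumLE Q y) ^ i ≤ (C * (1 - p + p * cumLE Q' y)) ^ i :=
        pow_le_pow_left₀ hFc0 hFc _
      have h2 : (1 - p + p * cumLT Q y) ^ (n - 1 - i)
          ≤ (C * (1 - p + p * cumLT Q' y)) ^ (n - 1 - i) :=
        pow_le_pow_left₀ hFb0 hFb _
      calc (1 - p + p * cumLE Q y) ^ i * (1 - p + p * cumLT Q y) ^ (n - 1 - i)
          ≤ (C * (1 - p + p * cumLE Q' y)) ^ i * (C * (1 - p + p * cumLT Q' y)) ^ (n - 1 - i) :=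
            mul_le_mul h1 h2 (pow_nonneg hFb0 _) (pow_nonneg (by positivity) _)
        _ = C ^ (i + (n - 1 - i)) *
            ((1 - p + p * cumLE Q' y) ^ i * (1 - p + p * cumLT Q' y) ^ (n - 1 - i)) := by
            rw [mul_pow, mul_pow, pow_add]; ring
        _ = C ^ (n - 1) *
            ((1 - p + p * cumLE Q' y) ^ i * (1 - p + p * cumLT Q' y) ^ (n - 1 - i)) := by
            rw [hik]
    have hstep : A y - Real.exp ε * A' y ≤ p * S * (Q y - eh * Q' y) := by
      rw [hAy, hA'y, hexp]
      have hmul := mul_le_mul_of_nonneg_left hSle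
        (mul_nonneg heh0.le (mul_nonneg hp0.le (hQ'_pos y).le) : (0:ℝ) ≤ eh * (p * Q' y))
      nlinarith [hmul]
    apply max_le _ (by positivity)
    rcases le_total (Q y - eh * Q' y) 0 with h | h
    · have hneg : p * S * (Q y - eh * Q' y) ≤ 0 :=
        mul_nonpos_of_nonneg_of_nonpos (by positivity) h
      have hrhs : 0 ≤ ((n : ℝ) * p) * max (Q y - eh * Q' y) 0 := by positivity
      linarith
    · rw [max_eq_left h]
      have h5 : p * S * (Q y - eh * Q' y) ≤ p * (n : ℝ) * (Q y - eh * Q' y) := by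
        have := mul_le_mul_of_nonneg_right
          (mul_le_mul_of_nonneg_left hSn hp0.le) h
        linarith
      linarith [hstep, h5]
  calc ∑ y, max (A y - Real.exp ε * A' y) 0
      ≤ ∑ y, ((n : ℝ) * p) * max (Q y - eh * Q' y) 0 := Finset.sum_le_sum fun y _ => hmain y
    _ = ((n : ℝ) * p) * ∑ y, max (Q y - eh * Q' y) 0 := by rw [Finset.mul_sum]
    _ ≤ ((n : ℝ) * p) * δ εh := by
        apply mul_le_mul_of_nonneg_left _ (by positivity)
        exact hδ εh
    _ = m * δ εh := by rw [hm]
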